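/- arXiv:1506.02896 — 8 statements merged into one kernel-verified Lean document; each statement's English description precedes it below -/
import Mathlib

section
/- For every z ∈ ℂ and every natural number k ≥ 1, one has P_k(z)² + P_{k−1}(z)² − z·P_k(z)·P_{k−1}(z) = P_k(z) + P_{k−1}(z). -/
/-- For every `z ∈ ℂ` and every natural number `k ≥ 1`, the partial sums
`P k = ∑_{i=0}^{k} S i` of the Chebyshev polynomials of the second kind satisfy
`P k ^ 2 + P (k-1) ^ 2 - z * P k * P (k-1) = P k + P (k-1)`. -/
theorem chebyshev_partial_sum_quadratic (z : ℂ) (S : ℤ → ℂ)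
    (hS0 : S 0 = 1) (hS1 : S 1 = z)
    (hSrec : ∀ k : ℤ, S k = z * S (k - 1) - S (k - 2))
    (P : ℕ → ℂ) (hP : ∀ k : ℕ, P k = ∑ i ∈ Finset.range (k + 1), S (i : ℤ)) :
    ∀ k : ℕ, 1 ≤ k →
      (P k) ^ 2 + (P (k - 1)) ^ 2 - z * P k * P (k - 1) = P k + P (k - 1) := by
  -- z * S k = S (k+1) + S (k-1)
  have hzS : ∀ k : ℤ, z * S k = S (k + 1) + S (k - 1) := by
    intro k
    have := hSrec (k + 1)
    simp only [add_sub_cancel_right] at this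
    have h2 : (k : ℤ) + 1 - 2 = k - 1 := by ring
    rw [h2] at this
    rw [this]; ring
  -- P (n+1) = P n + S (n+1)
  have hstep : ∀ n : ℕ, P (n + 1) = P n + S ((n : ℤ) + 1) := by
    intro n
    rw [hP (n + 1), hP n, Finset.sum_range_succ]
    push_cast
    ring
  have hP0 : P 0 = 1 := by rw [hP 0]; simp [hS0]
  have hP1 : P 1 = 1 + z := by
    have := hstep 0
    rw [hP0] at this
    simpa [hS1] using this
  -- key lemma: z * P n = P (n+1) + P (n-1) - 1 for n ≥ 1
  have key : ∀ n : ℕ, 1 ≤ n → z * P n = P (n + 1) + P (n - 1) - 1 := by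
    intro n hn
    induction n, hn using Nat.le_induction with
    | base =>
      have hS2 : S 2 = z * z - 1 := by
        have := hSrec 2
        norm_num [hS1, hS0] at this
        rw [this]
      have hP2 : P 2 = P 1 + S 2 := by simpa using hstep 1
      simp only [Nat.sub_self]
      rw [hP2, hP1, hP0, hS2]; ring
    | succ n hn ih =>
      have h1 : P (n + 1 + 1) = P (n + 1) + S ((n : ℤ) + 1 + 1) := by
        have := hstep (n + 1); push_cast at this ⊢; convert this using 3
      have h2 : P (n + 1) = P n + S ((n : ℤ) + 1) := hstep n
      have h3 : z * S ((n : ℤ) + 1) = S ((n : ℤ) + 1 + 1) + S n := by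
        have := hzS ((n : ℤ) + 1)
        simpa using this
      have hsub : (n + 1 : ℕ) - 1 = n := by omega
      have hsub2 : P n = P (n - 1) + S n := by
        cases n with
        | zero => omega
        | succ m =>
          have := hstep m
          simp only [Nat.add_sub_cancel]
          push_cast at this ⊢
          rw [this]
      rw [hsub, h1]
      linear_combination z * h2 + ih + h3 - hsub2
  intro k hk
  induction k, hk using Nat.le_induction with
  | base => simp only [Nat.sub_self]; rw [hP1, hP0]; ring
  | succ n hn ih =>
    have hsub : (n + 1 : ℕ) - 1 = n := by omega
    rw [hsub]
    have hk := key n hn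
    -- Q(P(n+1), P n) - Q(P n, P(n-1)) = (P(n+1)-P(n-1))(P(n+1)+P(n-1) - z P n - 1) = 0
    have hz : P (n + 1) + P (n - 1) - z * P n - 1 = 0 := by rw [hk]; ring
    have expand : (P (n+1))^2 + (P n)^2 - z * P (n+1) * P n - (P (n+1) + P n)
        = ((P n)^2 + (P (n-1))^2 - z * P n * P (n-1) - (P n + P (n-1)))
          + (P (n+1) - P (n-1)) * (P (n+1) + P (n-1) - z * P n - 1) := by ring
    have ih' : (P n)^2 + (P (n-1))^2 - z * P n * P (n-1) - (P n + P (n-1)) = 0 := by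
      rw [ih]; ring
    have : (P (n+1))^2 + (P n)^2 - z * P (n+1) * P n - (P (n+1) + P n) = 0 := by
      rw [expand, ih', hz]; ring
    linear_combination this
end

section
/- Let V = [[a, b], [c, d]] be a matrix in SL₂(ℂ) and set t = a + d. Then for every natural number k, ∑_{i=0}^{k} V^i = [[P_k(t) − d·P_{k−1}(t), b·P_{k−1}(t)], [c·P_{k−1}(t), P_k(t) − a·P_{k−1}(t)]]. -/
open Matrix

/-- Let `V = !![a, b; c, d]` be a matrix in `SL₂(ℂ)` and `t = a + d`. Then for every
natural number `k`, `∑_{i=0}^{k} V ^ i = !![P k - d * P (k-1), b * P (k-1);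
c * P (k-1), P k - a * P (k-1)]`, where `P k = ∑_{i=0}^{k} S i` (with the convention
`P (-1) = 0`) and `S` denotes the Chebyshev polynomials of the second kind evaluated
at `t`. -/
theorem sl2_sum_pow_chebyshev (a b c d t : ℂ) (hdet : a * d - b * c = 1) (ht : t = a + d)
    (S : ℤ → ℂ) (hS0 : S 0 = 1) (hS1 : S 1 = t)
    (hSrec : ∀ k : ℤ, S k = t * S (k - 1) - S (k - 2))
    (P : ℤ → ℂ) (hPneg : P (-1) = 0)
    (hP : ∀ k : ℕ, P (k : ℤ) = ∑ i ∈ Finset.range (k + 1), S (i : ℤ))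
    (V : Matrix (Fin 2) (Fin 2) ℂ) (hV : V = !![a, b; c, d]) :
    ∀ k : ℕ, ∑ i ∈ Finset.range (k + 1), V ^ i =
      !![P (k : ℤ) - d * P ((k : ℤ) - 1), b * P ((k : ℤ) - 1);
         c * P ((k : ℤ) - 1), P (k : ℤ) - a * P ((k : ℤ) - 1)] := by
  have hSneg1 : S (-1) = 0 := by
    have h := hSrec 1
    simp only [show (1:ℤ) - 1 = 0 from rfl, show (1:ℤ) - 2 = -1 from rfl] at h
    rw [hS1, hS0] at h
    linear_combination h
  -- formula for powers of V
  have hpow : ∀ k : ℕ, V ^ (k + 1) =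
      !![a * S (k:ℤ) - S ((k:ℤ) - 1), b * S (k:ℤ);
         c * S (k:ℤ), d * S (k:ℤ) - S ((k:ℤ) - 1)] := by
    intro k
    induction k with
    | zero =>
      simp only [Nat.cast_zero, zero_sub, hSneg1, hS0, pow_one, hV]
      norm_num
    | succ n ih =>
      have hrec := hSrec ((n:ℤ) + 1)
      have e1 : ((n:ℤ) + 1 - 1) = (n:ℤ) := by ring
      have e2 : ((n:ℤ) + 1 - 2) = (n:ℤ) - 1 := by ring
      rw [e1, e2] at hrec
      rw [pow_succ, ih, hV]
      ext i j
      fin_cases i <;> fin_cases j <;>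
        simp [Matrix.mul_apply, Fin.sum_univ_succ, Nat.cast_succ, hrec] <;>
        (rw [ht] at hrec ⊢;
          first
          | linear_combination (-(S (n:ℤ))) * hdet
          | linear_combination (S (n:ℤ)) * hdet
          | linear_combination (-2 * S (n:ℤ)) * hdet
          | linear_combination (2 * S (n:ℤ)) * hdet
          | (push_cast; linear_combination (-2 * S (n:ℤ)) * hdet)
          | (push_cast; linear_combination (2 * S (n:ℤ)) * hdet)
          | (push_cast; ring_nf; done))
  -- P recurrence
  have hP0 : P 0 = 1 := by
    have := hP 0; simpa [hS0] using this
  have hPstep : ∀ n : ℕ, P ((n:ℤ) + 1) = P (n:ℤ) + S ((n:ℤ) + 1) := by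
    intro n
    have h1 := hP (n + 1)
    have h2 := hP n
    rw [Finset.sum_range_succ] at h1
    push_cast at h1 ⊢
    rw [h1, h2]
  intro k
  induction k with
  | zero =>
    simp only [Nat.cast_zero, zero_sub, hPneg, hP0, Finset.range_one,
      Finset.sum_singleton, pow_zero]
    norm_num
    ext i j
    fin_cases i <;> fin_cases j <;> simp [Matrix.one_apply]
  | succ n ih =>
    rw [Finset.sum_range_succ, ih, hpow n]
    have hrec := hSrec ((n:ℤ) + 1)
    have e1 : ((n:ℤ) + 1 - 1) = (n:ℤ) := by ring
    have e2 : ((n:ℤ) + 1 - 2) = (n:ℤ) - 1 := by ring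
    rw [e1, e2] at hrec
    have hps := hPstep n
    have hQ : P (n:ℤ) = P ((n:ℤ) - 1) + S (n:ℤ) := by
      cases n with
      | zero => simp [hPneg, hP0, hS0]
      | succ m =>
        have e : ((m + 1 : ℕ) : ℤ) - 1 = (m:ℤ) := by push_cast; ring
        have h' := hPstep m
        push_cast
        rw [show ((m:ℤ) + 1) - 1 = (m:ℤ) by ring]
        push_cast at h'
        exact h'
    ext i j
    have ecast : ((n + 1 : ℕ) : ℤ) = (n:ℤ) + 1 := by push_cast; ring
    fin_cases i <;> fin_cases j <;>
      simp [ecast, hps] <;>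
      (rw [ht] at hrec
       first
       | linear_combination d * hQ - 2 * hrec
       | linear_combination (-b) * hQ - hrec
       | linear_combination (-c) * hQ - hrec
       | linear_combination a * hQ - 2 * hrec
       | (push_cast; linear_combination d * hQ - 2 * hrec)
       | (push_cast; linear_combination (-b) * hQ - hrec)
       | (push_cast; linear_combination (-c) * hQ - hrec)
       | (push_cast; linear_combination a * hQ - 2 * hrec)
       | (push_cast; linear_combination d * hQ - hrec)
       | (push_cast; linear_combination a * hQ - hrec)
       | (push_cast; linear_combination (-b) * hQ + 2 * hrec)
       | (push_cast; linear_combination (-c) * hQ + 2 * hrec)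
       | (push_cast; linear_combination (-b) * hQ + hrec)
       | (push_cast; linear_combination (-c) * hQ + hrec)
       | (push_cast; linear_combination d * hQ + 2 * hrec)
       | (push_cast; linear_combination a * hQ + 2 * hrec)
       | (push_cast; ring_nf; done)
       | (push_cast; linear_combination b * hQ)
       | (push_cast; linear_combination c * hQ)
       | (push_cast; linear_combination (-b) * hQ)
       | (push_cast; linear_combination (-c) * hQ))
end

section
/- Let V be a matrix in SL₂(ℂ) with trace t. Then for every natural number k ≥ 1, det(∑_{i=0}^{k} V^i) = P_k(t) + P_{k−1}(t). -/
open Matrix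

/-- Let `V` be a matrix in `SL₂(ℂ)` with trace `t`. Then for every natural number
`k ≥ 1`, `det (∑_{i=0}^{k} V ^ i) = P k + P (k-1)`, where `P k = ∑_{i=0}^{k} S i` and
`S` denotes the Chebyshev polynomials of the second kind evaluated at `t`. -/
theorem det_sum_pow_eq_P_add_P (V : Matrix (Fin 2) (Fin 2) ℂ) (hdet : V.det = 1)
    (t : ℂ) (ht : V.trace = t)
    (S : ℤ → ℂ) (hS0 : S 0 = 1) (hS1 : S 1 = t)
    (hSrec : ∀ k : ℤ, S k = t * S (k - 1) - S (k - 2))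
    (P : ℕ → ℂ) (hP : ∀ k : ℕ, P k = ∑ i ∈ Finset.range (k + 1), S (i : ℤ)) :
    ∀ k : ℕ, 1 ≤ k →
      (∑ i ∈ Finset.range (k + 1), V ^ i).det = P k + P (k - 1) := by
  -- basic entrywise facts
  have hd2 : V 0 0 * V 1 1 - V 0 1 * V 1 0 = 1 := by
    rw [Matrix.det_fin_two] at hdet; exact hdet
  have ht2 : V 0 0 + V 1 1 = t := by
    rw [Matrix.trace_fin_two] at ht; exact ht
  -- S at negative indices
  have hm1 : S (-1) = 0 := by
    have h := hSrec 1
    rw [show (1:ℤ) - 1 = 0 from by ring, show (1:ℤ) - 2 = -1 from by ring] at h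
    rw [hS0, hS1] at h; linear_combination h
  have hm2 : S (-2) = -1 := by
    have h := hSrec 0
    rw [show (0:ℤ) - 1 = -1 from by ring, show (0:ℤ) - 2 = -2 from by ring] at h
    rw [hS0, hm1] at h; linear_combination h
  -- clean recurrence
  have hrec : ∀ z : ℤ, S (z + 1) = t * S z - S (z - 1) := by
    intro z
    have h := hSrec (z + 1)
    rw [show z + 1 - 1 = z from by ring, show z + 1 - 2 = z - 1 from by ring] at h
    exact h
  -- Cayley-Hamilton for V
  have hV2 : V * V = t • V - 1 := by
    ext i j
    fin_cases i <;> fin_cases j <;>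
      simp [Matrix.mul_apply, Fin.sum_univ_two, Matrix.sub_apply, Matrix.smul_apply,
        Matrix.one_apply, smul_eq_mul]
    · linear_combination V 0 0 * ht2 - hd2
    · linear_combination V 0 1 * ht2
    · linear_combination V 1 0 * ht2
    · linear_combination V 1 1 * ht2 - hd2
  -- power formula
  have hpow : ∀ n : ℕ, V ^ n = S ((n : ℤ) - 1) • V - S ((n : ℤ) - 2) • 1 := by
    intro n
    induction n with
    | zero =>
      rw [pow_zero, show ((0:ℕ):ℤ) - 1 = -1 from by norm_num,
        show ((0:ℕ):ℤ) - 2 = -2 from by norm_num, hm1, hm2]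
      simp
    | succ n ih =>
      have hc1 : ((n + 1 : ℕ) : ℤ) - 1 = (n : ℤ) := by push_cast; ring
      have hc2 : ((n + 1 : ℕ) : ℤ) - 2 = (n : ℤ) - 1 := by push_cast; ring
      rw [pow_succ, ih, hc1, hc2, sub_mul, smul_mul_assoc, smul_mul_assoc, one_mul, hV2,
        hSrec (n : ℤ)]
      rw [smul_sub, smul_smul]
      module
  -- the sum of powers as a linear combination of V and 1
  have hsum : ∀ m : ℕ, ∑ i ∈ Finset.range m, V ^ i =
      (∑ i ∈ Finset.range m, S ((i : ℤ) - 1)) • V -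
      (∑ i ∈ Finset.range m, S ((i : ℤ) - 2)) • 1 := by
    intro m
    rw [Finset.sum_congr rfl (fun i _ => hpow i), Finset.sum_sub_distrib,
      Finset.sum_smul, Finset.sum_smul]
  -- determinant of a V + b 1
  have hdetAB : ∀ A B : ℂ, (A • V - B • (1 : Matrix (Fin 2) (Fin 2) ℂ)).det
      = A ^ 2 - t * A * B + B ^ 2 := by
    intro A B
    rw [Matrix.det_fin_two]
    simp only [Matrix.sub_apply, Matrix.smul_apply, Matrix.one_apply, smul_eq_mul]
    norm_num
    linear_combination A ^ 2 * hd2 - A * B * ht2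
  -- index shift lemmas
  have g1 : ∀ m : ℕ, ∑ i ∈ Finset.range (m + 1), S ((i : ℤ) - 1)
      = ∑ i ∈ Finset.range m, S (i : ℤ) := by
    intro m
    induction m with
    | zero =>
      rw [Finset.sum_range_one, show ((0:ℕ):ℤ) - 1 = -1 from by norm_num, hm1]
      simp
    | succ m ih =>
      rw [Finset.sum_range_succ, ih,
        show ((m + 1 : ℕ) : ℤ) - 1 = (m : ℤ) from by push_cast; ring,
        Finset.sum_range_succ]
  have g2 : ∀ m : ℕ, ∑ i ∈ Finset.range (m + 1), S ((i : ℤ) - 2)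
      = (∑ i ∈ Finset.range m, S ((i : ℤ) - 1)) - 1 := by
    intro m
    induction m with
    | zero =>
      rw [Finset.sum_range_one, show ((0:ℕ):ℤ) - 2 = -2 from by norm_num, hm2]
      simp
    | succ m ih =>
      rw [Finset.sum_range_succ, ih,
        show ((m + 1 : ℕ) : ℤ) - 2 = (m : ℤ) - 1 from by push_cast; ring,
        Finset.sum_range_succ]
      ring
  -- telescoping invariant
  have Inv : ∀ m : ℕ, (t - 2) * (∑ i ∈ Finset.range m, S (i : ℤ))
      = S (m : ℤ) - S ((m : ℤ) - 1) - 1 := by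
    intro m
    induction m with
    | zero =>
      simp only [Finset.range_zero, Finset.sum_empty, mul_zero, Nat.cast_zero, zero_sub]
      rw [show -(1:ℤ) = -1 from rfl, hm1, hS0]
      ring
    | succ m ih =>
      rw [Finset.sum_range_succ,
        show ((m + 1 : ℕ) : ℤ) = (m : ℤ) + 1 from by push_cast; ring,
        show (m : ℤ) + 1 - 1 = (m : ℤ) from by ring, hrec (m : ℤ)]
      linear_combination ih
  -- the key scalar identity
  have Q : ∀ m : ℕ,
      ((∑ i ∈ Finset.range m, S (i : ℤ)) + S (m : ℤ)) ^ 2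
      - t * ((∑ i ∈ Finset.range m, S (i : ℤ)) + S (m : ℤ))
          * ((∑ i ∈ Finset.range m, S (i : ℤ)) - 1)
      + ((∑ i ∈ Finset.range m, S (i : ℤ)) - 1) ^ 2
      = 2 * ((∑ i ∈ Finset.range m, S (i : ℤ)) + S (m : ℤ)) + S ((m : ℤ) + 1) := by
    intro m
    induction m with
    | zero =>
      simp only [Finset.range_zero, Finset.sum_empty, Nat.cast_zero, zero_add, hS0]
      rw [hS1]
      ring
    | succ m ih =>
      have h1 := hrec (m : ℤ)
      have h2 := hrec ((m : ℤ) + 1)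
      rw [show (m : ℤ) + 1 - 1 = (m : ℤ) from by ring] at h2
      rw [Finset.sum_range_succ,
        show ((m + 1 : ℕ) : ℤ) = (m : ℤ) + 1 from by push_cast; ring]
      linear_combination ih - (S ((m : ℤ) + 1) + S (m : ℤ)) * Inv m
        + (S ((m : ℤ) + 1) + S (m : ℤ)) * h1 - h2
  -- assemble
  intro k hk
  obtain ⟨m, rfl⟩ : ∃ m, k = m + 1 := ⟨k - 1, (Nat.succ_pred_eq_of_pos hk).symm⟩
  rw [hsum, hdetAB, g1 (m + 1), g2 (m + 1), g1 m]
  rw [hP (m + 1), hP (m + 1 - 1)]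
  simp only [Nat.add_sub_cancel]
  rw [Finset.sum_range_succ (f := fun i => S (i : ℤ)) (n := m + 1),
    Finset.sum_range_succ (f := fun i => S (i : ℤ)) (n := m),
    show ((m + 1 : ℕ) : ℤ) = (m : ℤ) + 1 from by push_cast; ring]
  linear_combination Q m
end

section
/- Let V be a matrix in SL₂(ℂ) with trace t. Then for every natural number k ≥ 1, (t − 2)·det(∑_{i=0}^{k} V^i) = S_{k+1}(t) − S_{k−1}(t) − 2. -/
open Matrix

/-- Let `V` be a matrix in `SL₂(ℂ)` with trace `t`. Then for every natural number
`k ≥ 1`, `(t - 2) * det (∑_{i=0}^{k} V ^ i) = S (k+1) - S (k-1) - 2`, where `S` denotes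
the Chebyshev polynomials of the second kind evaluated at `t`. -/
theorem det_sum_pow_chebyshev (V : Matrix (Fin 2) (Fin 2) ℂ) (hdet : V.det = 1)
    (t : ℂ) (ht : V.trace = t)
    (S : ℤ → ℂ) (hS0 : S 0 = 1) (hS1 : S 1 = t)
    (hSrec : ∀ k : ℤ, S k = t * S (k - 1) - S (k - 2)) :
    ∀ k : ℕ, 1 ≤ k →
      (t - 2) * (∑ i ∈ Finset.range (k + 1), V ^ i).det =
        S ((k : ℤ) + 1) - S ((k : ℤ) - 1) - 2 := by
  have hdet' : V 0 0 * V 1 1 - V 0 1 * V 1 0 = 1 := by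
    rw [← Matrix.det_fin_two]; exact hdet
  have ht' : V 0 0 + V 1 1 = t := by
    rw [← Matrix.trace_fin_two]; exact ht
  have hSrec' : ∀ n : ℤ, S (n + 1) = t * S n - S (n - 1) := by
    intro n
    have := hSrec (n + 1)
    simpa [show n + 1 - 1 = n by ring, show n + 1 - 2 = n - 1 by ring] using this
  have hSm1 : S (-1) = 0 := by
    have h := hSrec' 0
    norm_num [hS0, hS1] at h
    linear_combination h
  -- Cayley–Hamilton for 2×2
  have hV2 : V ^ 2 = t • V - 1 := by
    ext i j
    fin_cases i <;> fin_cases j <;>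
      simp [pow_two, Matrix.mul_apply, Fin.sum_univ_two, Matrix.one_apply,
        Matrix.smul_apply, Matrix.sub_apply, smul_eq_mul] <;>
      first
        | linear_combination V 0 0 * ht' - hdet'
        | linear_combination V 0 1 * ht'
        | linear_combination V 1 0 * ht'
        | linear_combination V 1 1 * ht' - hdet'
  -- powers of V
  have hpow : ∀ n : ℕ, V ^ (n + 1) =
      S n • V - S ((n : ℤ) - 1) • (1 : Matrix (Fin 2) (Fin 2) ℂ) := by
    intro n
    induction n with
    | zero => simp [hS0, hSm1]
    | succ n ih =>
      have hrec : S ((n : ℤ) + 1) = t * S n - S ((n : ℤ) - 1) := hSrec' n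
      have : V ^ (n + 2) = (S n • V - S ((n : ℤ) - 1) • 1) * V := by
        rw [← ih, ← pow_succ]
      rw [show n + 1 + 1 = n + 2 from rfl, this]
      push_cast
      rw [show ((n : ℤ) + 1 - 1) = (n : ℤ) by ring, hrec]
      rw [sub_mul, smul_mul_assoc, smul_mul_assoc, one_mul, ← pow_two, hV2]
      ext i j
      simp [Matrix.sub_apply, Matrix.smul_apply, Matrix.one_apply, smul_eq_mul,
        Matrix.add_apply]
      split_ifs <;> ring
  set A : ℕ → ℂ := fun k => ∑ i ∈ Finset.range k, S i with hA
  have hAsucc : ∀ k : ℕ, A (k + 1) = A k + S k := by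
    intro k; simp [hA, Finset.sum_range_succ]
  -- decomposition of the partial sums
  have hW : ∀ k : ℕ, (∑ i ∈ Finset.range (k + 1), V ^ i) =
      A k • V + (1 - A k + S ((k : ℤ) - 1)) • 1 := by
    intro k
    induction k with
    | zero => simp [hA, hSm1]
    | succ k ih =>
      rw [Finset.sum_range_succ, ih, hpow k, hAsucc k]
      push_cast
      rw [show ((k : ℤ) + 1 - 1) = (k : ℤ) by ring]
      ext i j
      simp [Matrix.add_apply, Matrix.sub_apply, Matrix.smul_apply, Matrix.one_apply,
        smul_eq_mul]
      split_ifs <;> ring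
  have hdetAB : ∀ a b : ℂ, (a • V + b • (1 : Matrix (Fin 2) (Fin 2) ℂ)).det =
      a ^ 2 + a * b * t + b ^ 2 := by
    intro a b
    rw [Matrix.det_fin_two]
    simp [Matrix.add_apply, Matrix.smul_apply, Matrix.one_apply, smul_eq_mul]
    linear_combination a ^ 2 * hdet' + a * b * ht'
  have htA : ∀ k : ℕ, (t - 2) * A k = S k - S ((k : ℤ) - 1) - 1 := by
    intro k
    induction k with
    | zero => simp [hA, hS0, hSm1]
    | succ k ih =>
      rw [hAsucc k]
      push_cast
      rw [show ((k : ℤ) + 1 - 1) = (k : ℤ) by ring]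
      linear_combination ih - hSrec' k
  have hnorm : ∀ k : ℕ, S k ^ 2 + S ((k : ℤ) - 1) ^ 2 - t * S k * S ((k : ℤ) - 1) = 1 := by
    intro k
    induction k with
    | zero => simp [hS0, hSm1]
    | succ k ih =>
      push_cast
      rw [show ((k : ℤ) + 1 - 1) = (k : ℤ) by ring]
      linear_combination ih + (S ((k : ℤ) + 1) - S ((k : ℤ) - 1)) * hSrec' k
  intro k _
  rw [hW k, hdetAB]
  linear_combination
    ((t - 2) * (1 + S ((k : ℤ) - 1)) - (t - 2) * A k - S k + 1 + S ((k : ℤ) - 1)) * htA k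
    - hnorm k - hSrec' k
end

section
/- Let s, u ∈ ℂ with s ≠ 0, let A = [[s, 1], [0, s⁻¹]], B = [[s, 0], [−u, s⁻¹]] in SL₂(ℂ), W = B·A⁻¹·B⁻¹·A, and z = 2 + (2 − s² − s⁻²)u + u². Then for every integer n, W^n·A − B·W^n = [[0, φ], [u·φ, 0]], where φ = S_n(z) − (u² − (u+1)(s² + s⁻² − 3))·S_{n−1}(z). -/
/-!
`W` has determinant one, so by Cayley–Hamilton `W² = z W - 1` with `z = tr W`, and hence
`Wⁿ = Sₙ₋₁(z) W - Sₙ₋₂(z)` for all integers `n`. Therefore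
`Wⁿ A - B Wⁿ = Sₙ₋₁(z) (W A - B W) - Sₙ₋₂(z) (A - B)`; both `W A - B W` and `A - B` are
antidiagonal of the shape `!![0, c; u c, 0]`, and the Chebyshev recurrence turns the
combination into `φ`.
-/

open Matrix

namespace Matrix

variable {n R : Type*} [Fintype n] [DecidableEq n] [CommRing R]

theorem mul_self_fin_two (M : Matrix (Fin 2) (Fin 2) R) :
    M * M = M.trace • M - M.det • 1 := by
  nontriviality R
  have h := aeval_self_charpoly M
  rw [charpoly_fin_two] at h
  simp only [map_add, map_sub, map_mul, map_pow, Polynomial.aeval_X, Polynomial.aeval_C,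
    Algebra.algebraMap_eq_smul_one, smul_mul_assoc, one_mul] at h
  rw [← sq, ← sub_eq_zero, ← h]
  abel

theorem inv_eq_adjugate_of_det_eq_one {M : Matrix n n R} (h : M.det = 1) :
    M⁻¹ = M.adjugate := by
  rw [inv_def, h, Ring.inverse_one, one_smul]

theorem zpow_eq_of_mul_self_eq {M : Matrix n n R} {z : R} (hM : M * M = z • M - 1)
    {S : ℤ → R} (hS0 : S 0 = 1) (hS1 : S 1 = z) (hrec : ∀ k, S k = z * S (k - 1) - S (k - 2))
    (k : ℤ) : M ^ k = S (k - 1) • M - S (k - 2) • 1 := by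
  have hright : M * (z • 1 - M) = 1 := by
    rw [Matrix.mul_sub, Matrix.mul_smul, Matrix.mul_one, hM]
    abel
  have hdet : IsUnit M.det := isUnit_det_of_right_inverse hright
  have hSm1 : S (-1) = 0 := by
    have := hrec 1
    norm_num [hS0, hS1] at this
    linear_combination this
  have hSm2 : S (-2) = -1 := by
    have := hrec 0
    norm_num [hS0, hSm1] at this
    linear_combination this
  induction k using Int.induction_on with
  | zero => simp [hSm1, hSm2]
  | succ k ih =>
    rw [zpow_add_one hdet, ih]
    simp only [sub_mul, smul_mul_assoc, one_mul, hM]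
    rw [add_sub_cancel_right, show (k : ℤ) + 1 - 2 = k - 1 by ring, hrec k]
    module
  | pred k ih =>
    rw [zpow_sub_one hdet, ih, inv_eq_right_inv hright]
    simp only [sub_mul, mul_sub, smul_mul_assoc, Matrix.mul_smul, one_mul, Matrix.mul_one, hM]
    rw [hrec (-k - 1), show -(k : ℤ) - 1 - 1 = -k - 2 by ring,
      show -(k : ℤ) - 1 - 2 = -k - 3 by ring]
    module

end Matrix

section Riley

variable {K : Type*} [Field K] {s : K}

def rileyA (s : K) : Matrix (Fin 2) (Fin 2) K := !![s, 1; 0, s⁻¹]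

def rileyB (s u : K) : Matrix (Fin 2) (Fin 2) K := !![s, 0; -u, s⁻¹]

noncomputable def rileyW (s u : K) : Matrix (Fin 2) (Fin 2) K :=
  rileyB s u * (rileyA s)⁻¹ * (rileyB s u)⁻¹ * rileyA s

theorem det_rileyA (hs : s ≠ 0) : (rileyA s).det = 1 := by
  simp [rileyA, det_fin_two_of, hs]

theorem det_rileyB (hs : s ≠ 0) (u : K) : (rileyB s u).det = 1 := by
  simp [rileyB, det_fin_two_of, hs]

theorem det_rileyW (hs : s ≠ 0) (u : K) : (rileyW s u).det = 1 := by
  simp only [rileyW, det_mul, det_nonsing_inv, det_rileyA hs, det_rileyB hs u, Ring.inverse_one,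
    mul_one]

theorem rileyW_eq (hs : s ≠ 0) (u : K) :
    rileyW s u = !![1 - u * s ^ 2, s⁻¹ - s * (u + 1);
      u * s * (u + 1) - u * s⁻¹, (u + 1) ^ 2 - u * s⁻¹ ^ 2] := by
  rw [rileyW, inv_eq_adjugate_of_det_eq_one (det_rileyA hs),
    inv_eq_adjugate_of_det_eq_one (det_rileyB hs u), rileyA, rileyB, adjugate_fin_two_of,
    adjugate_fin_two_of]
  ext i j
  fin_cases i <;> fin_cases j <;> simp <;> field_simp <;> ring

theorem trace_rileyW (hs : s ≠ 0) (u : K) :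
    (rileyW s u).trace = 2 + (2 - s ^ 2 - s⁻¹ ^ 2) * u + u ^ 2 := by
  rw [rileyW_eq hs, trace_fin_two_of]
  ring

theorem rileyW_mul_rileyA_sub_rileyB_mul_rileyW (hs : s ≠ 0) (u : K) :
    rileyW s u * rileyA s - rileyB s u * rileyW s u =
      !![0, s ^ 2 + s⁻¹ ^ 2 - u - 1; u * (s ^ 2 + s⁻¹ ^ 2 - u - 1), 0] := by
  rw [rileyW_eq hs, rileyA, rileyB]
  ext i j
  fin_cases i <;> fin_cases j <;> simp <;> field_simp <;> ring

theorem rileyA_sub_rileyB (s u : K) : rileyA s - rileyB s u = !![0, 1; u, 0] := by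
  ext i j
  fin_cases i <;> fin_cases j <;> simp [rileyA, rileyB]

end Riley

/-- Let `s, u ∈ ℂ` with `s ≠ 0`, let `A = !![s, 1; 0, s⁻¹]`, `B = !![s, 0; -u, s⁻¹]`,
`W = B * A⁻¹ * B⁻¹ * A`, and `z = 2 + (2 - s² - s⁻²)u + u²`. Then for every integer `n`,
`W^n * A - B * W^n = !![0, φ; u * φ, 0]`, where
`φ = S n - (u² - (u+1)(s² + s⁻² - 3)) * S (n-1)` is the Riley polynomial of the twist
knot `J(2,2n)` evaluated at `(s, u)` (here `S` denotes the Chebyshev polynomials of the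
second kind evaluated at `z`). -/
theorem riley_polynomial_twist_knot (s u z : ℂ) (hs : s ≠ 0)
    (hz : z = 2 + (2 - s ^ 2 - s⁻¹ ^ 2) * u + u ^ 2)
    (S : ℤ → ℂ) (hS0 : S 0 = 1) (hS1 : S 1 = z)
    (hSrec : ∀ k : ℤ, S k = z * S (k - 1) - S (k - 2))
    (A B W : Matrix (Fin 2) (Fin 2) ℂ)
    (hA : A = !![s, 1; 0, s⁻¹]) (hB : B = !![s, 0; -u, s⁻¹])
    (hW : W = B * A⁻¹ * B⁻¹ * A) :
    ∀ n : ℤ, W ^ n * A - B * W ^ n =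
      !![0, S n - (u ^ 2 - (u + 1) * (s ^ 2 + s⁻¹ ^ 2 - 3)) * S (n - 1);
         u * (S n - (u ^ 2 - (u + 1) * (s ^ 2 + s⁻¹ ^ 2 - 3)) * S (n - 1)), 0] := by
  intro n
  have hA' : A = rileyA s := hA
  have hB' : B = rileyB s u := hB
  have hW' : W = rileyW s u := by rw [hW, hA', hB', rileyW]
  have hWsq : W * W = z • W - 1 := by
    rw [mul_self_fin_two, hW', trace_rileyW hs, det_rileyW hs, one_smul, hz]
  have expand : W ^ n * A - B * W ^ n = S (n - 1) • (W * A - B * W) - S (n - 2) • (A - B) := by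
    rw [zpow_eq_of_mul_self_eq hWsq hS0 hS1 hSrec n]
    simp only [sub_mul, mul_sub, smul_mul_assoc, Matrix.mul_smul, one_mul, Matrix.mul_one]
    module
  rw [expand, hW', hA', hB', rileyW_mul_rileyA_sub_rileyB_mul_rileyW hs, rileyA_sub_rileyB,
    hSrec n, hz]
  ext i j
  fin_cases i <;> fin_cases j <;> simp <;> ring
end

section
/- Let s, u ∈ ℂ with s ≠ 0, let z = 2 + (2 − s² − s⁻²)u + u², and let n be an integer. If the Riley condition S_n(z) = (u² − (u+1)(s² + s⁻² − 3))·S_{n−1}(z) holds, then (u + 2 − s² − s⁻²)·(u² − (s² + s⁻² − 2)(u + 1))·S_{n−1}(z)² = 1. -/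
/-!
The quadratic form `S k ^ 2 - z * S k * S (k - 1) + S (k - 1) ^ 2` is invariant under the
three-term recurrence, so it equals its value `1` at `k = 0`. Substituting the Riley condition
`S n = a * S (n - 1)` turns it into `(a ^ 2 - z * a + 1) * S (n - 1) ^ 2 = 1`, and
`a ^ 2 - z * a + 1` factors as claimed: this is a polynomial identity in `u` and
`t = s ^ 2 + s⁻¹ ^ 2`.
-/

section Chebyshev

variable {R : Type*} [CommRing R] {z : R} {S : ℤ → R}

theorem periodic_sq_sub_mul_mul_add_sq (hSrec : ∀ k : ℤ, S k = z * S (k - 1) - S (k - 2)) :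
    Function.Periodic (fun k => S k ^ 2 - z * S k * S (k - 1) + S (k - 1) ^ 2) 1 := by
  intro k
  have hrec : S (k + 1) = z * S k - S (k - 1) := by
    simpa only [add_sub_cancel_right, show k + 1 - 2 = k - 1 by ring] using hSrec (k + 1)
  simp only [add_sub_cancel_right, hrec]
  ring

theorem sq_sub_mul_mul_add_sq_eq_one (hS0 : S 0 = 1) (hS1 : S 1 = z)
    (hSrec : ∀ k : ℤ, S k = z * S (k - 1) - S (k - 2)) (k : ℤ) :
    S k ^ 2 - z * S k * S (k - 1) + S (k - 1) ^ 2 = 1 := by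
  have hSm1 : S (-1) = 0 := by
    have h := hSrec 1
    rw [hS1, sub_self, hS0, show (1 : ℤ) - 2 = -1 by norm_num] at h
    linear_combination h
  have h := (periodic_sq_sub_mul_mul_add_sq hSrec).int_mul_eq k
  simp only [Int.cast_id, mul_one, zero_sub, hS0, hSm1] at h
  linear_combination h

end Chebyshev

theorem riley_factorization {R : Type*} [CommRing R] (t u : R) :
    (u ^ 2 - (u + 1) * (t - 3)) ^ 2 - (2 + (2 - t) * u + u ^ 2) * (u ^ 2 - (u + 1) * (t - 3)) + 1 =
      (u + 2 - t) * (u ^ 2 - (t - 2) * (u + 1)) := by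
  ring

theorem riley_square_identity_general (s u z : ℂ)
    (hz : z = 2 + (2 - s ^ 2 - s⁻¹ ^ 2) * u + u ^ 2)
    (S : ℤ → ℂ) (hS0 : S 0 = 1) (hS1 : S 1 = z)
    (hSrec : ∀ k : ℤ, S k = z * S (k - 1) - S (k - 2))
    (n : ℤ)
    (hRiley : S n = (u ^ 2 - (u + 1) * (s ^ 2 + s⁻¹ ^ 2 - 3)) * S (n - 1)) :
    (u + 2 - s ^ 2 - s⁻¹ ^ 2) * (u ^ 2 - (s ^ 2 + s⁻¹ ^ 2 - 2) * (u + 1)) *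
      (S (n - 1)) ^ 2 = 1 := by
  have hinv := sq_sub_mul_mul_add_sq_eq_one hS0 hS1 hSrec n
  rw [hRiley, hz] at hinv
  have hfac := riley_factorization (s ^ 2 + s⁻¹ ^ 2) u
  linear_combination hinv - S (n - 1) ^ 2 * hfac

/-- Let `s, u ∈ ℂ` with `s ≠ 0`, let `z = 2 + (2 - s² - s⁻²)u + u²`, and let `n` be an
integer. If the Riley condition `S n = (u² - (u+1)(s² + s⁻² - 3)) * S (n-1)` holds
(where `S` denotes the Chebyshev polynomials of the second kind evaluated at `z`), then
`(u + 2 - s² - s⁻²) * (u² - (s² + s⁻² - 2)(u+1)) * S (n-1)² = 1`. -/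
theorem riley_square_identity (s u z : ℂ) (hs : s ≠ 0)
    (hz : z = 2 + (2 - s ^ 2 - s⁻¹ ^ 2) * u + u ^ 2)
    (S : ℤ → ℂ) (hS0 : S 0 = 1) (hS1 : S 1 = z)
    (hSrec : ∀ k : ℤ, S k = z * S (k - 1) - S (k - 2))
    (n : ℤ)
    (hRiley : S n = (u ^ 2 - (u + 1) * (s ^ 2 + s⁻¹ ^ 2 - 3)) * S (n - 1)) :
    (u + 2 - s ^ 2 - s⁻¹ ^ 2) * (u ^ 2 - (s ^ 2 + s⁻¹ ^ 2 - 2) * (u + 1)) *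
      (S (n - 1)) ^ 2 = 1 :=
  riley_square_identity_general s u z hz S hS0 hS1 hSrec n hRiley
end

section
/- Let s, u ∈ ℂ with s ≠ 0, let A = [[s, 1], [0, s⁻¹]], B = [[s, 0], [−u, s⁻¹]] in SL₂(ℂ), W = B·A⁻¹·B⁻¹·A, x = s + s⁻¹, and z = 2 + (2 − s² − s⁻²)u + u². For a natural number n ≥ 1, set Δ = ∑_{i=0}^{n−1} W^{−i} and Ω = A⁻¹·(I − B)·(I − A)·Δ. Then (z − 2)·det Ω = (2 − x)²·(S_n(z) − S_{n−2}(z) − 2); equivalently det Ω = (2 − x)²·(P_{n−1}(z) + P_{n−2}(z)). -/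
/-!
Since `W` has determinant `1` and trace `z`, Cayley–Hamilton (`W² = zW - 1`, `W⁻¹ = z - W`)
gives `W⁻ⁱ = Sᵢ(z) - Sᵢ₋₁(z) W`, hence `Δ = P_{n-1}(z) - P_{n-2}(z) W`. For a unimodular `2 × 2`
matrix, `det (a - bW) = a² - abz + b²`, and for consecutive partial sums `a = P_{k+1}`, `b = P_k` this
equals `P_{k+1} + P_k` by a Cassini-type identity. The factors `A⁻¹`, `1 - A`, `1 - B` of `Ω`
contribute `1`, `2 - x`, `2 - x`, and the first form of the result follows from
`(z - 2)(P_{k+1} + P_k) = S_{k+2} - S_k - 2`.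
-/

namespace Polynomial.Chebyshev

open Finset

variable {R : Type*} [CommRing R]

theorem eq_S_eval_of_recurrence {f : ℤ → R} {t : R} (h0 : f 0 = 1) (h1 : f 1 = t)
    (hrec : ∀ k, f k = t * f (k - 1) - f (k - 2)) (k : ℤ) : f k = (S R k).eval t := by
  induction k using Polynomial.Chebyshev.induct with
  | zero => simp [h0]
  | one => simp [h1]
  | add_two n ih1 ih0 =>
    rw [hrec, S_add_two, add_sub_cancel_right, show (n : ℤ) + 2 - 1 = n + 1 by ring, ih1, ih0]
    simp
  | neg_add_one n ih0 ih1 =>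
    have h := hrec (-n + 1)
    rw [show -(n : ℤ) + 1 - 1 = -n by ring, show -(n : ℤ) + 1 - 2 = -n - 1 by ring] at h
    rw [S_sub_one, eval_sub, eval_mul, eval_X, ← ih0, ← ih1]
    linear_combination h

variable (R) in
/-- `sumS R m = S₀ + ⋯ + S_{m-1}`, the `P_{m-1}` of the statement. -/
noncomputable def sumS (m : ℕ) : R[X] := ∑ i ∈ range m, S R i

theorem sumS_succ (m : ℕ) : sumS R (m + 1) = sumS R m + S R m := sum_range_succ _ _

theorem sumS_add_two (m : ℕ) : sumS R (m + 2) = X * sumS R (m + 1) - sumS R m + 1 := by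
  induction m with
  | zero => simp [sumS, sum_range_succ, add_comm]
  | succ m ih =>
    have e3 := sumS_succ (R := R) (m + 2)
    have e2 := sumS_succ (R := R) (m + 1)
    have e1 := sumS_succ (R := R) m
    have h := S_add_two R m
    push_cast at e3 e2 ⊢
    linear_combination e3 + h - X * e2 + ih + e1

theorem sumS_sq_sub_X_mul_add_sq (m : ℕ) :
    sumS R (m + 1) ^ 2 - X * sumS R (m + 1) * sumS R m + sumS R m ^ 2
      = sumS R (m + 1) + sumS R m := by
  induction m with
  | zero => simp [sumS]
  | succ m ih =>
    linear_combination ih + (sumS R (m + 2) - sumS R m) * sumS_add_two (R := R) m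

theorem X_sub_two_mul_sumS_add_sumS (m : ℕ) :
    (X - 2) * (sumS R (m + 1) + sumS R m) = S R (m + 1) - S R (m - 1) - 2 := by
  induction m with
  | zero => simp [sumS]
  | succ m ih =>
    have h2 := S_add_one R (m + 1)
    have h1 := S_add_one R m
    have e2 := sumS_succ (R := R) (m + 1)
    simp only [Nat.cast_add, Nat.cast_one, add_sub_cancel_right] at h2 e2 ⊢
    linear_combination ih + (X - 2) * e2 + (X - 2) * sumS_succ (R := R) m - h2 - h1

end Polynomial.Chebyshev

namespace Matrix

open Polynomial Polynomial.Chebyshev Finset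

variable {R : Type*} [CommRing R] (M : Matrix (Fin 2) (Fin 2) R)

theorem mul_self_eq_trace_smul_sub_det_smul_fin_two : M * M = M.trace • M - M.det • 1 := by
  ext i j
  fin_cases i <;> fin_cases j <;>
    simp [mul_apply, trace_fin_two, det_fin_two] <;> ring

theorem det_smul_one_sub_smul_fin_two (a b : R) :
    (a • 1 - b • M).det = a ^ 2 - a * b * M.trace + b ^ 2 * M.det := by
  simp [det_fin_two, trace_fin_two]
  ring

variable {M}

theorem det_one_sub_of_det_eq_one (hM : M.det = 1) : (1 - M).det = 2 - M.trace := by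
  have h := det_smul_one_sub_smul_fin_two M 1 1
  simp only [one_smul, one_pow, one_mul, hM] at h
  rw [h]
  ring

theorem inv_eq_trace_smul_one_sub_of_det_eq_one (hM : M.det = 1) : M⁻¹ = M.trace • 1 - M := by
  refine inv_eq_right_inv ?_
  rw [mul_sub, mul_smul_comm, mul_one, mul_self_eq_trace_smul_sub_det_smul_fin_two, hM, one_smul, sub_sub_cancel]

theorem zpow_eq_S_eval_smul_sub_of_det_eq_one (hM : M.det = 1) (n : ℤ) :
    M ^ n = (S R (n - 1)).eval M.trace • M - (S R (n - 2)).eval M.trace • 1 := by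
  have hU : IsUnit M.det := hM ▸ isUnit_one
  induction n using Int.induction_on with
  | zero => simp
  | succ n ih =>
    rw [zpow_add_one hU, ih, sub_mul, smul_mul_assoc, smul_mul_assoc, one_mul, mul_self_eq_trace_smul_sub_det_smul_fin_two,
      hM, add_sub_cancel_right, show (n : ℤ) + 1 - 2 = n - 1 by ring, S_eq R n]
    simp only [eval_sub, eval_mul, eval_X]
    module
  | pred n ih =>
    rw [zpow_sub_one hU, ih, inv_eq_trace_smul_one_sub_of_det_eq_one hM, S_sub_two R (-n - 1),
      show (-n - 1 - 1 : ℤ) = -n - 2 by ring]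
    simp only [sub_mul, mul_sub, smul_mul_assoc, mul_smul_comm, one_mul, mul_one, mul_self_eq_trace_smul_sub_det_smul_fin_two,
      hM, eval_sub, eval_mul, eval_X]
    module

theorem sum_range_zpow_neg_of_det_eq_one (hM : M.det = 1) (m : ℕ) :
    ∑ i ∈ range (m + 1), M ^ (-(i : ℤ)) =
      (sumS R (m + 1)).eval M.trace • 1 - (sumS R m).eval M.trace • M := by
  have hpow (i : ℕ) :
      M ^ (-(i : ℤ)) = (S R i).eval M.trace • 1 - (S R (i - 1)).eval M.trace • M := by
    rw [zpow_eq_S_eval_smul_sub_of_det_eq_one hM, S_neg_sub_one, S_neg_sub_two]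
    simp only [eval_neg, neg_smul]
    abel
  rw [sum_congr rfl fun i _ => hpow i, sum_sub_distrib, ← sum_smul, ← sum_smul,
    sum_range_succ' (fun i : ℕ => (S R (i - 1)).eval M.trace)]
  simp [sumS, eval_finsetSum]

theorem det_sum_range_zpow_neg_of_det_eq_one (hM : M.det = 1) (m : ℕ) :
    (∑ i ∈ range (m + 1), M ^ (-(i : ℤ))).det = (sumS R (m + 1) + sumS R m).eval M.trace := by
  rw [sum_range_zpow_neg_of_det_eq_one hM, det_smul_one_sub_smul_fin_two, hM,
    ← sumS_sq_sub_X_mul_add_sq m]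
  simp only [mul_one, eval_add, eval_sub, eval_mul, eval_pow, eval_X]
  ring

theorem trace_riley_commutator {K : Type*} [Field K] {s : K} (hs : s ≠ 0) (u : K) :
    (!![s, 0; -u, s⁻¹] * !![s, 1; 0, s⁻¹]⁻¹ * !![s, 0; -u, s⁻¹]⁻¹ * !![s, 1; 0, s⁻¹]).trace
      = 2 + (2 - s ^ 2 - s⁻¹ ^ 2) * u + u ^ 2 := by
  rw [inv_eq_trace_smul_one_sub_of_det_eq_one (by simp [hs]),
    inv_eq_trace_smul_one_sub_of_det_eq_one (by simp [hs])]
  simp [one_fin_two, trace_fin_two_of]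
  field_simp
  ring

end Matrix

open Matrix Polynomial

/-- Let `s, u ∈ ℂ` with `s ≠ 0`, let `A = !![s, 1; 0, s⁻¹]`, `B = !![s, 0; -u, s⁻¹]`,
`W = B * A⁻¹ * B⁻¹ * A`, `x = s + s⁻¹`, `z = 2 + (2 - s² - s⁻²)u + u²`. For a natural
number `n ≥ 1`, set `Δ = ∑_{i=0}^{n-1} W^(-i)` and `Ω = A⁻¹ * (1 - B) * (1 - A) * Δ`.
Then `(z - 2) * det Ω = (2 - x)² * (S n - S (n-2) - 2)`; equivalently
`det Ω = (2 - x)² * (P (n-1) + P (n-2))`, where `S` denotes the Chebyshev polynomials of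
the second kind evaluated at `z` and `P k = ∑_{i=0}^{k} S i` with `P (-1) = 0`. -/
theorem det_Omega_twist_knot (s u x z : ℂ) (hs : s ≠ 0)
    (hx : x = s + s⁻¹) (hz : z = 2 + (2 - s ^ 2 - s⁻¹ ^ 2) * u + u ^ 2)
    (S : ℤ → ℂ) (hS0 : S 0 = 1) (hS1 : S 1 = z)
    (hSrec : ∀ k : ℤ, S k = z * S (k - 1) - S (k - 2))
    (P : ℤ → ℂ) (hPneg : P (-1) = 0)
    (hP : ∀ k : ℕ, P (k : ℤ) = ∑ i ∈ Finset.range (k + 1), S (i : ℤ))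
    (A B W : Matrix (Fin 2) (Fin 2) ℂ)
    (hA : A = !![s, 1; 0, s⁻¹]) (hB : B = !![s, 0; -u, s⁻¹])
    (hW : W = B * A⁻¹ * B⁻¹ * A)
    (n : ℕ) (hn : 1 ≤ n)
    (Δ Ω : Matrix (Fin 2) (Fin 2) ℂ)
    (hΔ : Δ = ∑ i ∈ Finset.range n, W ^ (-(i : ℤ)))
    (hΩ : Ω = A⁻¹ * (1 - B) * (1 - A) * Δ) :
    (z - 2) * Ω.det = (2 - x) ^ 2 * (S (n : ℤ) - S ((n : ℤ) - 2) - 2) ∧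
    Ω.det = (2 - x) ^ 2 * (P ((n : ℤ) - 1) + P ((n : ℤ) - 2)) := by
  obtain ⟨m, rfl⟩ : ∃ m, n = m + 1 := ⟨n - 1, by omega⟩
  have hS' (k : ℤ) : S k = (Chebyshev.S ℂ k).eval z :=
    Chebyshev.eq_S_eval_of_recurrence hS0 hS1 hSrec k
  have hP' : ∀ k : ℕ, P (k - 1) = (Chebyshev.sumS ℂ k).eval z := by
    rintro (_ | k)
    · simpa [Chebyshev.sumS] using hPneg
    · simp [hP, hS', Chebyshev.sumS, eval_finsetSum]
  have hdetA : A.det = 1 := by simp [hA, hs]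
  have hdetB : B.det = 1 := by simp [hB, hs]
  have hdetW : W.det = 1 := by simp [hW, det_nonsing_inv, hdetA, hdetB]
  have htrW : W.trace = z := by rw [hW, hA, hB, hz, trace_riley_commutator hs]
  have hdetΩ : Ω.det = (2 - x) ^ 2 * (Chebyshev.sumS ℂ (m + 1) + Chebyshev.sumS ℂ m).eval z := by
    rw [hΩ, hΔ, det_mul, det_mul, det_mul, det_nonsing_inv, hdetA, Ring.inverse_one,
      det_one_sub_of_det_eq_one hdetA, det_one_sub_of_det_eq_one hdetB,
      det_sum_range_zpow_neg_of_det_eq_one hdetW, htrW, hA, hB, hx]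
    simp only [trace_fin_two_of]
    ring
  have hidx : ((m + 1 : ℕ) : ℤ) - 2 = m - 1 := by push_cast; ring
  refine ⟨?_, ?_⟩
  · have h := congrArg (eval z) (Chebyshev.X_sub_two_mul_sumS_add_sumS (R := ℂ) m)
    simp only [eval_mul, eval_sub, eval_X, eval_ofNat] at h
    rw [hdetΩ, hidx, hS', hS', Nat.cast_succ, ← h]
    ring
  · rw [hdetΩ, eval_add, hidx, hP', hP']
end

section
/- Let s, u ∈ ℂ with s ≠ 0 and u ≠ 0, let A = [[s, 1], [0, s⁻¹]], B = [[s, 0], [−u, s⁻¹]] in SL₂(ℂ), W = B·A⁻¹·B⁻¹·A, W' = A·B⁻¹·A⁻¹·B, x = s + s⁻¹, and z = 2 + (2 − s² − s⁻²)u + u². Let n ≥ 1 be a natural number and suppose the Riley condition S_n(z) = (u² − (u+1)(s² + s⁻² − 3))·S_{n−1}(z) holds and x ∉ {0, 2}. Let L = (W')^n·W^n. Then trace(L) ≠ 2, and ((2 − x)·(P_{n−1}(z) + P_{n−2}(z)) + x·S_{n−1}(z)) / (2 − trace(L)) = ((x − 2)·(P_{n−1}(z) + P_{n−2}(z)) −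 x·S_{n−1}(z)) · (u⁻²·(u + 1)·(x² − 4) − 1) · x⁻². (The left side is τ_ρ(E_K)/(2 − tr ρ(λ)), the Reidemeister torsion of the manifold obtained by p/q-surgery on the twist knot J(2,2n).) -/
/-!
Write `S_k` for the Chebyshev polynomials of the second kind at `z`. The matrices `W`, `W'` lie
in `SL₂` and have trace `z`, so `W ^ (k + 1) = S_k W - S_{k-1}`, and likewise for `W'`.
Expanding `tr (W' ^ n * W ^ n)` with the identity `S_k² + S_{k-1}² - z S_k S_{k-1} = 1` gives
`tr L - 2 = S_{n-1}² (tr (W' W) - 2) = S_{n-1}² x² u² (x² - 4 - u)`.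
The Riley condition makes `S_{n-2}` a multiple of `S_{n-1}`, and the same identity then says
`S_{n-1}² (x² - 4 - u) ((u + 1)(x² - 4) - u²) = 1`. Hence
`((u + 1)(x² - 4) - u²)(tr L - 2) = x² u² ≠ 0`, and this is exactly the claimed equality once
the common numerator `(2 - x)(P_{n-1} + P_{n-2}) + x S_{n-1}` is cancelled.
-/

open Matrix

namespace Polynomial.Chebyshev

variable {R : Type*} [CommRing R]

theorem S_eval_eq_of_recurrence {S' : ℤ → R} {z : R} (h0 : S' 0 = 1) (h1 : S' 1 = z)
    (hrec : ∀ k, S' k = z * S' (k - 1) - S' (k - 2)) (k : ℤ) : (S R k).eval z = S' k := by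
  induction k using Polynomial.Chebyshev.induct with
  | zero => simp [h0]
  | one => simp [h1]
  | add_two n ih1 ih0 =>
    have e := hrec (n + 2)
    rw [show (n : ℤ) + 2 - 1 = n + 1 by ring, show (n : ℤ) + 2 - 2 = n by ring] at e
    rw [S_add_two, eval_sub, eval_mul, eval_X, ih1, ih0, e]
  | neg_add_one n ih0 ih1 =>
    have e := hrec (-n + 1)
    rw [show -(n : ℤ) + 1 - 1 = -n by ring, show -(n : ℤ) + 1 - 2 = -n - 1 by ring] at e
    rw [S_sub_one, eval_sub, eval_mul, eval_X, ih0, ih1, e]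
    ring

theorem pow_succ_eq_S_eval_smul {A : Type*} [Ring A] [Algebra R A] {V : A} {z : R}
    (hV : V ^ 2 = z • V - 1) (k : ℕ) :
    V ^ (k + 1) = (S R k).eval z • V - (S R (k - 1)).eval z • (1 : A) := by
  induction k with
  | zero => simp
  | succ k ih =>
    rw [pow_succ, ih, sub_mul, smul_mul_assoc, smul_mul_assoc, ← sq, hV, one_mul, Nat.cast_succ,
      add_sub_cancel_right, S_add_one, eval_sub, eval_mul, eval_X]
    simp only [smul_sub, smul_smul, sub_smul, mul_comm z]
    abel

theorem S_eval_sq_mul_eq_one_of_S_eval_succ {z r : R} {k : ℤ}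
    (h : (S R (k + 1)).eval z = r * (S R k).eval z) :
    (S R k).eval z ^ 2 * (1 - r * (z - r)) = 1 := by
  have hcas := congrArg (eval z) (S_sq_add_S_sq R (k - 1))
  have hrec := congrArg (eval z) (S_add_one R k)
  simp only [eval_sub, eval_add, eval_mul, eval_pow, eval_X, eval_one, sub_add_cancel] at hcas hrec
  linear_combination hcas + ((S R (k - 1)).eval z - r * (S R k).eval z) * (h - hrec)

end Polynomial.Chebyshev

namespace Matrix

variable {R : Type*} [CommRing R]

theorem sq_fin_two_eq_trace_smul_sub_det_smul (M : Matrix (Fin 2) (Fin 2) R) :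
    M ^ 2 = M.trace • M - M.det • 1 := by
  ext i j
  fin_cases i <;> fin_cases j <;>
    simp [sq, mul_apply, Fin.sum_univ_two, trace_fin_two, det_fin_two] <;> ring

theorem inv_fin_two_of_det_eq_one {M : Matrix (Fin 2) (Fin 2) R} (h : M.det = 1) :
    M⁻¹ = !![M 1 1, -M 0 1; -M 1 0, M 0 0] := by
  rw [inv_def, h, Ring.inverse_one, one_smul, adjugate_fin_two]

theorem det_mul_inv_mul_inv_mul {n : Type*} [Fintype n] [DecidableEq n] {A B : Matrix n n R}
    (hA : IsUnit A.det) (hB : IsUnit B.det) : (B * A⁻¹ * B⁻¹ * A).det = 1 := by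
  calc (B * A⁻¹ * B⁻¹ * A).det
      = (B.det * Ring.inverse B.det) * (Ring.inverse A.det * A.det) := by
        simp only [det_mul, det_nonsing_inv]; ring
    _ = 1 := by rw [Ring.mul_inverse_cancel _ hB, Ring.inverse_mul_cancel _ hA, one_mul]

open Polynomial Chebyshev in
theorem trace_pow_succ_mul_pow_succ_sub_two {V V' : Matrix (Fin 2) (Fin 2) R} {z : R}
    (hV : V.det = 1) (hV' : V'.det = 1) (htr : V.trace = z) (htr' : V'.trace = z) (k : ℕ) :
    (V' ^ (k + 1) * V ^ (k + 1)).trace - 2 = (S R k).eval z ^ 2 * ((V' * V).trace - 2) := by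
  have hsq {M : Matrix (Fin 2) (Fin 2) R} (hM : M.det = 1) (htrM : M.trace = z) :
      M ^ 2 = z • M - 1 := by
    rw [sq_fin_two_eq_trace_smul_sub_det_smul, hM, htrM, one_smul]
  have hcas := congrArg (eval z) (S_sq_add_S_sq R (k - 1))
  simp only [eval_sub, eval_add, eval_mul, eval_pow, eval_X, eval_one, sub_add_cancel] at hcas
  rw [pow_succ_eq_S_eval_smul (hsq hV htr), pow_succ_eq_S_eval_smul (hsq hV' htr')]
  simp only [sub_mul, mul_sub, smul_mul_assoc, mul_smul_comm, one_mul, mul_one,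
    trace_sub, trace_smul, trace_one, htr, htr', Fintype.card_fin, smul_eq_mul]
  linear_combination 2 * hcas

end Matrix

namespace TwistKnot

open Polynomial Chebyshev

variable {K : Type*} [Field K] {s u : K}

def rileyA (s : K) : Matrix (Fin 2) (Fin 2) K := !![s, 1; 0, s⁻¹]

def rileyB (s u : K) : Matrix (Fin 2) (Fin 2) K := !![s, 0; -u, s⁻¹]

noncomputable def rileyW (s u : K) : Matrix (Fin 2) (Fin 2) K :=
  rileyB s u * (rileyA s)⁻¹ * (rileyB s u)⁻¹ * rileyA s

noncomputable def rileyW' (s u : K) : Matrix (Fin 2) (Fin 2) K :=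
  rileyA s * (rileyB s u)⁻¹ * (rileyA s)⁻¹ * rileyB s u

theorem det_rileyA (hs : s ≠ 0) : (rileyA s).det = 1 := by
  simp [rileyA, det_fin_two, hs]

theorem det_rileyB (hs : s ≠ 0) : (rileyB s u).det = 1 := by
  simp [rileyB, det_fin_two, hs]

theorem inv_rileyA (hs : s ≠ 0) : (rileyA s)⁻¹ = !![s⁻¹, -1; 0, s] := by
  rw [inv_fin_two_of_det_eq_one (det_rileyA hs)]
  simp [rileyA]

theorem inv_rileyB (hs : s ≠ 0) : (rileyB s u)⁻¹ = !![s⁻¹, 0; u, s] := by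
  rw [inv_fin_two_of_det_eq_one (det_rileyB hs)]
  simp [rileyB]

theorem det_rileyW (hs : s ≠ 0) : (rileyW s u).det = 1 :=
  det_mul_inv_mul_inv_mul (by simp [det_rileyA hs]) (by simp [det_rileyB hs])

theorem det_rileyW' (hs : s ≠ 0) : (rileyW' s u).det = 1 :=
  det_mul_inv_mul_inv_mul (by simp [det_rileyB hs]) (by simp [det_rileyA hs])

theorem trace_rileyW (hs : s ≠ 0) :
    (rileyW s u).trace = 2 + (2 - s ^ 2 - s⁻¹ ^ 2) * u + u ^ 2 := by
  rw [rileyW, inv_rileyA hs, inv_rileyB hs]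
  simp only [rileyA, rileyB, mul_fin_two, trace_fin_two, of_apply, cons_val_zero, cons_val_one]
  field_simp
  ring

theorem trace_rileyW' (hs : s ≠ 0) :
    (rileyW' s u).trace = 2 + (2 - s ^ 2 - s⁻¹ ^ 2) * u + u ^ 2 := by
  rw [rileyW', inv_rileyA hs, inv_rileyB hs]
  simp only [rileyA, rileyB, mul_fin_two, trace_fin_two, of_apply, cons_val_zero, cons_val_one]
  field_simp
  ring

theorem trace_rileyW'_mul_rileyW_sub_two (hs : s ≠ 0) :
    (rileyW' s u * rileyW s u).trace - 2 = (s + s⁻¹) ^ 2 * u ^ 2 * ((s - s⁻¹) ^ 2 - u) := by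
  rw [rileyW, rileyW', inv_rileyA hs, inv_rileyB hs]
  simp only [rileyA, rileyB, mul_fin_two, trace_fin_two, of_apply, cons_val_zero, cons_val_one]
  field_simp
  ring

theorem mul_trace_longitude_sub_two (hs : s ≠ 0) {z : K}
    (hz : z = 2 + (2 - s ^ 2 - s⁻¹ ^ 2) * u + u ^ 2) {m : ℕ}
    (hRiley : (S K (m + 1)).eval z
      = (u ^ 2 - (u + 1) * (s ^ 2 + s⁻¹ ^ 2 - 3)) * (S K m).eval z) :
    ((u + 1) * ((s + s⁻¹) ^ 2 - 4) - u ^ 2) *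
      ((rileyW' s u ^ (m + 1) * rileyW s u ^ (m + 1)).trace - 2) = (s + s⁻¹) ^ 2 * u ^ 2 := by
  have hnorm := S_eval_sq_mul_eq_one_of_S_eval_succ hRiley
  have hfactor : 1 - (u ^ 2 - (u + 1) * (s ^ 2 + s⁻¹ ^ 2 - 3)) *
      (z - (u ^ 2 - (u + 1) * (s ^ 2 + s⁻¹ ^ 2 - 3)))
      = ((s - s⁻¹) ^ 2 - u) * ((u + 1) * ((s + s⁻¹) ^ 2 - 4) - u ^ 2) := by
    rw [hz]
    field_simp
    ring
  rw [trace_pow_succ_mul_pow_succ_sub_two (det_rileyW hs) (det_rileyW' hs)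
    ((trace_rileyW hs).trans hz.symm) ((trace_rileyW' hs).trans hz.symm),
    trace_rileyW'_mul_rileyW_sub_two hs]
  linear_combination (s + s⁻¹) ^ 2 * u ^ 2 * hnorm
    - (s + s⁻¹) ^ 2 * u ^ 2 * (S K m).eval z ^ 2 * hfactor

end TwistKnot

open Polynomial TwistKnot in
theorem torsion_dehn_surgery_twist_knot_general (s u x z : ℂ) (hs : s ≠ 0) (hu : u ≠ 0)
    (hx : x = s + s⁻¹) (hz : z = 2 + (2 - s ^ 2 - s⁻¹ ^ 2) * u + u ^ 2)
    (S : ℤ → ℂ) (hS0 : S 0 = 1) (hS1 : S 1 = z)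
    (hSrec : ∀ k : ℤ, S k = z * S (k - 1) - S (k - 2))
    (P : ℤ → ℂ)
    (A B W W' : Matrix (Fin 2) (Fin 2) ℂ)
    (hA : A = !![s, 1; 0, s⁻¹]) (hB : B = !![s, 0; -u, s⁻¹])
    (hW : W = B * A⁻¹ * B⁻¹ * A) (hW' : W' = A * B⁻¹ * A⁻¹ * B)
    (n : ℕ) (hn : 1 ≤ n)
    (hRiley : S (n : ℤ) = (u ^ 2 - (u + 1) * (s ^ 2 + s⁻¹ ^ 2 - 3)) * S ((n : ℤ) - 1))
    (hx0 : x ≠ 0)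
    (L : Matrix (Fin 2) (Fin 2) ℂ) (hL : L = W' ^ n * W ^ n) :
    L.trace ≠ 2 ∧
    ((2 - x) * (P ((n : ℤ) - 1) + P ((n : ℤ) - 2)) + x * S ((n : ℤ) - 1)) /
        (2 - L.trace) =
      ((x - 2) * (P ((n : ℤ) - 1) + P ((n : ℤ) - 2)) - x * S ((n : ℤ) - 1)) *
        (u⁻¹ ^ 2 * (u + 1) * (x ^ 2 - 4) - 1) * x⁻¹ ^ 2 := by
  obtain ⟨m, rfl⟩ : ∃ m, n = m + 1 := ⟨n - 1, by omega⟩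
  have hSeval := Chebyshev.S_eval_eq_of_recurrence hS0 hS1 hSrec
  have hRiley' : (Chebyshev.S ℂ (m + 1)).eval z
      = (u ^ 2 - (u + 1) * (s ^ 2 + s⁻¹ ^ 2 - 3)) * (Chebyshev.S ℂ m).eval z := by
    simpa [hSeval] using hRiley
  have htrace : ((u + 1) * (x ^ 2 - 4) - u ^ 2) * (L.trace - 2) = x ^ 2 * u ^ 2 := by
    subst hx hA hB hW hW' hL
    exact mul_trace_longitude_sub_two hs hz hRiley'
  have htrace_ne : L.trace ≠ 2 := by
    intro h
    rw [h, sub_self, mul_zero] at htrace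
    exact mul_ne_zero (pow_ne_zero 2 hx0) (pow_ne_zero 2 hu) htrace.symm
  refine ⟨htrace_ne, ?_⟩
  have hfactor : (u⁻¹ ^ 2 * (u + 1) * (x ^ 2 - 4) - 1) * x⁻¹ ^ 2 = -(2 - L.trace)⁻¹ := by
    have : 2 - L.trace ≠ 0 := sub_ne_zero.2 htrace_ne.symm
    field_simp
    linear_combination -htrace
  rw [mul_assoc, hfactor]
  ring

/-- Let `s, u ∈ ℂ` with `s ≠ 0`, `u ≠ 0`, let `A = !![s, 1; 0, s⁻¹]`,
`B = !![s, 0; -u, s⁻¹]`, `W = B * A⁻¹ * B⁻¹ * A`, `W' = A * B⁻¹ * A⁻¹ * B`,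
`x = s + s⁻¹`, `z = 2 + (2 - s² - s⁻²)u + u²`. Let `n ≥ 1` be a natural number and
suppose the Riley condition `S n = (u² - (u+1)(s² + s⁻² - 3)) * S (n-1)` holds and
`x ∉ {0, 2}`. Let `L = (W')^n * W^n` (the matrix of the canonical longitude). Then
`trace L ≠ 2` and
`((2 - x)(P (n-1) + P (n-2)) + x S (n-1)) / (2 - trace L)
  = ((x - 2)(P (n-1) + P (n-2)) - x S (n-1)) * (u⁻²(u+1)(x² - 4) - 1) * x⁻²`.
The left side is `τ_ρ(E_K) / (2 - tr ρ(λ))`, the Reidemeister torsion of the manifold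
obtained by `p/q`-surgery on the twist knot `J(2,2n)`. Here `S` denotes the Chebyshev
polynomials of the second kind evaluated at `z` and `P k = ∑_{i=0}^{k} S i` with
`P (-1) = 0`. -/
theorem torsion_dehn_surgery_twist_knot (s u x z : ℂ) (hs : s ≠ 0) (hu : u ≠ 0)
    (hx : x = s + s⁻¹) (hz : z = 2 + (2 - s ^ 2 - s⁻¹ ^ 2) * u + u ^ 2)
    (S : ℤ → ℂ) (hS0 : S 0 = 1) (hS1 : S 1 = z)
    (hSrec : ∀ k : ℤ, S k = z * S (k - 1) - S (k - 2))
    (P : ℤ → ℂ) (hPneg : P (-1) = 0)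
    (hP : ∀ k : ℕ, P (k : ℤ) = ∑ i ∈ Finset.range (k + 1), S (i : ℤ))
    (A B W W' : Matrix (Fin 2) (Fin 2) ℂ)
    (hA : A = !![s, 1; 0, s⁻¹]) (hB : B = !![s, 0; -u, s⁻¹])
    (hW : W = B * A⁻¹ * B⁻¹ * A) (hW' : W' = A * B⁻¹ * A⁻¹ * B)
    (n : ℕ) (hn : 1 ≤ n)
    (hRiley : S (n : ℤ) = (u ^ 2 - (u + 1) * (s ^ 2 + s⁻¹ ^ 2 - 3)) * S ((n : ℤ) - 1))
    (hx0 : x ≠ 0) (hx2 : x ≠ 2)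
    (L : Matrix (Fin 2) (Fin 2) ℂ) (hL : L = W' ^ n * W ^ n) :
    L.trace ≠ 2 ∧
    ((2 - x) * (P ((n : ℤ) - 1) + P ((n : ℤ) - 2)) + x * S ((n : ℤ) - 1)) /
        (2 - L.trace) =
      ((x - 2) * (P ((n : ℤ) - 1) + P ((n : ℤ) - 2)) - x * S ((n : ℤ) - 1)) *
        (u⁻¹ ^ 2 * (u + 1) * (x ^ 2 - 4) - 1) * x⁻¹ ^ 2 :=
  torsion_dehn_surgery_twist_knot_general s u x z hs hu hx hz S hS0 hS1 hSrec P A B W W' hA hB hW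
    hW' n hn hRiley hx0 L hL
end
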